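/- Let P and Q be joint distributions of a pair (X, Y) on a finite set S × S with |S| = K ≥ 2, having equal marginals on X. If the total variation-type L1 distance ‖P − Q‖₁ = ε ≤ 2/e, then |I_P(X;Y) − I_Q(X;Y)| ≤ 3ε·log K + 2·h(ε/2), where h(p) = −p·log p − (1−p)·log(1−p) is the binary entropy function. -/

import Mathlib

open Real

noncomputable def shEnt {α : Type*} [Fintype α] (p : α → ℝ) : ℝ :=
  ∑ x, Real.negMulLog (p x)

noncomputable def margX {α β : Type*} [Fintype β] (p : α → β → ℝ) (x : α) : ℝ :=
  ∑ y, p x y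

noncomputable def margY {α β : Type*} [Fintype α] (p : α → β → ℝ) (y : β) : ℝ :=
  ∑ x, p x y

noncomputable def jointEnt {α β : Type*} [Fintype α] [Fintype β] (p : α → β → ℝ) : ℝ :=
  ∑ x, ∑ y, Real.negMulLog (p x y)

noncomputable def mutInf {α β : Type*} [Fintype α] [Fintype β] (p : α → β → ℝ) : ℝ :=
  shEnt (margX p) + shEnt (margY p) - jointEnt p

/-- Binary entropy function (in nats). -/
noncomputable def binEnt (p : ℝ) : ℝ := -p * Real.log p - (1 - p) * Real.log (1 - p)

/-!
Since the `X`-marginals agree, `I_P - I_Q = (H(P_Y) - H(Q_Y)) - (H(P) - H(Q))`, and both entropy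
differences are controlled by `|H(p) - H(q)| ≤ T log n + h(T)` with `T = ‖p - q‖₁ / 2`;
marginalising does not increase the `L¹` distance, and `T ≤ ε / 2 ≤ 1 / 2` lies where `h` is
monotone.

For the entropy bound, split `p = m + a` and `q = m + b` with `m = min p q`, so `∑ a = T` and
`∑ m = 1 - T`. Subadditivity of `η(x) = -x log x` gives `H(p) ≤ ∑ η(m) + ∑ η(a)`; Jensen gives
`∑ η(a) ≤ η(T) + T log n`; and the unnormalised entropy `∑ mᵢ log (∑ m / mᵢ)` is monotone in `m`,
which gives `∑ η(m) ≤ η(1 - T) + H(q)`. Finally `η(T) + η(1 - T) = h(T)`.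
-/

open Finset

lemma binEnt_eq_binEntropy : binEnt = binEntropy := by
  ext p
  simp [binEnt, binEntropy, log_inv]
  ring

lemma negMulLog_add_le {a b : ℝ} (ha : 0 ≤ a) (hb : 0 ≤ b) :
    negMulLog (a + b) ≤ negMulLog a + negMulLog b := by
  have hlog {x : ℝ} (hx : 0 ≤ x) (hxb : x ≤ a + b) : -x * log (a + b) ≤ -x * log x := by
    rcases hx.eq_or_lt with rfl | hx
    · simp
    · exact mul_le_mul_of_nonpos_left (log_le_log hx hxb) (by linarith)
  simp only [negMulLog, add_mul, neg_add]
  linarith [hlog ha (by linarith), hlog hb (by linarith)]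

/-- Gibbs' inequality `x log (z / x) ≤ z - x` with `z = M y / Q`, followed by `x ≤ y`. -/
lemma mul_log_sub_log_le {x y M Q : ℝ} (hx : 0 ≤ x) (hxy : x ≤ y) (hxM : x ≤ M)
    (hyQ : y ≤ Q) (hQ : 0 < Q) :
    x * (log M - log x) ≤ y * (log Q - log y) + (M * y / Q - x) := by
  rcases hx.eq_or_lt with rfl | hx
  · have hy : 0 ≤ y * (log Q - log y) := by
      rcases hxy.eq_or_lt with rfl | hy
      · simp
      · exact mul_nonneg hy.le (sub_nonneg.2 (log_le_log hy hyQ))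
    have : 0 ≤ M * y / Q := div_nonneg (mul_nonneg hxM hxy) hQ.le
    simp only [zero_mul, sub_zero]
    linarith
  have hy : 0 < y := hx.trans_le hxy
  have hM : 0 < M := hx.trans_le hxM
  have gibbs : x * log (M * y / (Q * x)) ≤ M * y / Q - x := by
    have := log_le_sub_one_of_pos (show 0 < M * y / (Q * x) by positivity)
    calc x * log (M * y / (Q * x)) ≤ x * (M * y / (Q * x) - 1) :=
          mul_le_mul_of_nonneg_left this hx.le
      _ = M * y / Q - x := by field_simp
  have hlog : log (M * y / (Q * x)) = (log M - log x) - (log Q - log y) := by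
    rw [log_div (by positivity) (by positivity), log_mul hM.ne' hy.ne',
      log_mul hQ.ne' hx.ne']
    ring
  have hmono : x * (log Q - log y) ≤ y * (log Q - log y) :=
    mul_le_mul_of_nonneg_right hxy (sub_nonneg.2 (log_le_log hy hyQ))
  rw [hlog] at gibbs
  linarith

section Fintype

variable {α : Type*} [Fintype α]

lemma sum_negMulLog_sub_negMulLog_sum (x : α → ℝ) :
    ∑ i, negMulLog (x i) - negMulLog (∑ i, x i)
      = ∑ i, x i * (log (∑ j, x j) - log (x i)) := by
  simp only [negMulLog, neg_mul, sum_neg_distrib, mul_sub, sum_sub_distrib, ← sum_mul]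
  ring

lemma sum_negMulLog_sub_negMulLog_sum_le {m q : α → ℝ} (hm : ∀ i, 0 ≤ m i)
    (hmq : ∀ i, m i ≤ q i) :
    ∑ i, negMulLog (m i) - negMulLog (∑ i, m i)
      ≤ ∑ i, negMulLog (q i) - negMulLog (∑ i, q i) := by
  have hq i : 0 ≤ q i := (hm i).trans (hmq i)
  rw [sum_negMulLog_sub_negMulLog_sum, sum_negMulLog_sub_negMulLog_sum]
  set M := ∑ i, m i
  set Q := ∑ i, q i
  rcases (sum_nonneg fun i _ ↦ hq i : 0 ≤ Q).eq_or_lt with hQ | hQ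
  · have hq0 i : q i = 0 := (sum_eq_zero_iff_of_nonneg fun i _ ↦ hq i).1 hQ.symm i (mem_univ i)
    have hm0 i : m i = 0 := le_antisymm (hq0 i ▸ hmq i) (hm i)
    simp [hq0, hm0]
  calc ∑ i, m i * (log M - log (m i))
      ≤ ∑ i, (q i * (log Q - log (q i)) + (M * q i / Q - m i)) :=
        sum_le_sum fun i _ ↦ mul_log_sub_log_le (hm i) (hmq i)
          (single_le_sum (fun j _ ↦ hm j) (mem_univ i))
          (single_le_sum (fun j _ ↦ hq j) (mem_univ i)) hQ
    _ = ∑ i, q i * (log Q - log (q i)) := by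
        rw [sum_add_distrib, sum_sub_distrib, ← sum_div, ← mul_sum,
          mul_div_cancel_right₀ _ hQ.ne']
        simp [M]

lemma sum_negMulLog_le (a : α → ℝ) (ha : ∀ i, 0 ≤ a i) :
    ∑ i, negMulLog (a i) ≤ negMulLog (∑ i, a i) + (∑ i, a i) * log (Fintype.card α) := by
  rcases isEmpty_or_nonempty α with hα | hα
  · simp
  set n : ℝ := (Fintype.card α : ℝ)
  have hn : 0 < n := Nat.cast_pos.2 Fintype.card_pos
  have jensen := concaveOn_negMulLog.le_map_sum (t := univ) (w := fun _ ↦ n⁻¹) (p := a)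
    (fun _ _ ↦ inv_nonneg.2 hn.le) (by simp [n]) (fun i _ ↦ Set.mem_Ici.2 (ha i))
  have hinv : negMulLog n⁻¹ = n⁻¹ * log n := by simp [negMulLog, log_inv]
  simp only [smul_eq_mul, ← mul_sum, negMulLog_mul, hinv] at jensen
  have := mul_le_mul_of_nonneg_left jensen hn.le
  field_simp at this
  linarith

lemma shEnt_sub_le {p q : α → ℝ} (hp : ∀ i, 0 ≤ p i) (hq : ∀ i, 0 ≤ q i)
    (hps : ∑ i, p i = 1) (hqs : ∑ i, q i = 1) :
    shEnt p - shEnt q ≤ (∑ i, |p i - q i|) / 2 * log (Fintype.card α)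
      + binEntropy ((∑ i, |p i - q i|) / 2) := by
  set T := (∑ i, |p i - q i|) / 2
  set m := fun i ↦ min (p i) (q i)
  set a := fun i ↦ p i - m i
  have hm i : 0 ≤ m i := le_min (hp i) (hq i)
  have ha i : 0 ≤ a i := sub_nonneg.2 (min_le_left _ _)
  have haT : ∑ i, a i = T := by
    have h i : a i = (p i - q i + |p i - q i|) / 2 := by
      rcases le_total (p i) (q i) with h | h
      · simp [a, m, min_eq_left h, abs_of_nonpos (sub_nonpos.2 h)]
      · simp [a, m, min_eq_right h, abs_of_nonneg (sub_nonneg.2 h)]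
    simp only [h, ← sum_div, sum_add_distrib, sum_sub_distrib, hps, hqs, T]
    ring
  have hmT : ∑ i, m i = 1 - T := by
    rw [← hps, ← haT, ← sum_sub_distrib]
    simp [a]
  have hsplit : shEnt p ≤ ∑ i, negMulLog (m i) + ∑ i, negMulLog (a i) := by
    rw [← sum_add_distrib]
    exact sum_le_sum fun i _ ↦ by simpa [a] using negMulLog_add_le (hm i) (ha i)
  have hcommon := sum_negMulLog_sub_negMulLog_sum_le hm fun i ↦ min_le_right (p i) (q i)
  have hexcess := sum_negMulLog_le a ha
  rw [hmT, hqs, negMulLog_one] at hcommon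
  rw [haT] at hexcess
  rw [binEntropy_eq_negMulLog_add_negMulLog_one_sub]
  unfold shEnt at *
  linarith

lemma abs_shEnt_sub_le {p q : α → ℝ} (hp : ∀ i, 0 ≤ p i) (hq : ∀ i, 0 ≤ q i)
    (hps : ∑ i, p i = 1) (hqs : ∑ i, q i = 1) {t : ℝ}
    (ht : (∑ i, |p i - q i|) / 2 ≤ t) (ht' : t ≤ 2⁻¹) :
    |shEnt p - shEnt q| ≤ t * log (Fintype.card α) + binEntropy t := by
  set T := (∑ i, |p i - q i|) / 2
  have hT : 0 ≤ T := div_nonneg (sum_nonneg fun i _ ↦ abs_nonneg _) zero_le_two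
  have hsymm : ∑ i, |q i - p i| = ∑ i, |p i - q i| := sum_congr rfl fun i _ ↦ abs_sub_comm _ _
  obtain ⟨i, -⟩ : ∃ i, p i ≠ 0 := by
    by_contra! h
    simp [h] at hps
  have hlog : 0 ≤ log (Fintype.card α) :=
    log_nonneg (Nat.one_le_cast.2 (Fintype.card_pos_iff.2 ⟨i⟩))
  have hmono :
      T * log (Fintype.card α) + binEntropy T ≤ t * log (Fintype.card α) + binEntropy t :=
    add_le_add (mul_le_mul_of_nonneg_right ht hlog) <|
      binEntropy_strictMonoOn.monotoneOn ⟨hT, ht.trans ht'⟩ ⟨hT.trans ht, ht'⟩ ht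
  have hpq := shEnt_sub_le hp hq hps hqs
  have hqp := shEnt_sub_le hq hp hqs hps
  rw [hsymm] at hqp
  exact abs_sub_le_iff.2 ⟨hpq.trans hmono, hqp.trans hmono⟩

end Fintype

section Joint

variable {α β : Type*} [Fintype α] [Fintype β]

lemma jointEnt_eq_shEnt_uncurry (p : α → β → ℝ) :
    jointEnt p = shEnt (Function.uncurry p) := by
  rw [shEnt, Fintype.sum_prod_type]
  rfl

lemma sum_margY (p : α → β → ℝ) : ∑ y, margY p y = ∑ x, ∑ y, p x y :=
  sum_comm

lemma sum_abs_margY_sub_le (p q : α → β → ℝ) :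
    ∑ y, |margY p y - margY q y| ≤ ∑ x, ∑ y, |p x y - q x y| := by
  rw [sum_comm]
  refine sum_le_sum fun y _ ↦ ?_
  rw [margY, margY, ← sum_sub_distrib]
  exact abs_sum_le_sum_abs _ _

lemma mutInf_sub_mutInf_of_margX_eq {p q : α → β → ℝ} (h : ∀ x, margX p x = margX q x) :
    mutInf p - mutInf q
      = (shEnt (margY p) - shEnt (margY q)) - (jointEnt p - jointEnt q) := by
  rw [mutInf, mutInf, funext h]
  ring

end Joint

/-- Continuity of mutual information (Csiszár–Körner type): if `P` and `Q` are joint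
distributions on `S × S` with `|S| = K ≥ 2`, equal `X`-marginals, and L1 distance
`ε ≤ 2/e`, then `|I_P(X;Y) − I_Q(X;Y)| ≤ 3ε·log K + 2·h(ε/2)`. -/
theorem mutual_information_continuity
    {S : Type*} [Fintype S] (K : ℕ) (hK : 2 ≤ K) (hcard : Fintype.card S = K)
    (P Q : S → S → ℝ)
    (hPpos : ∀ x y, 0 ≤ P x y) (hQpos : ∀ x y, 0 ≤ Q x y)
    (hPsum : ∑ x, ∑ y, P x y = 1) (hQsum : ∑ x, ∑ y, Q x y = 1)
    (hmarg : ∀ x, margX P x = margX Q x)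
    (ε : ℝ) (hε : ε = ∑ x, ∑ y, |P x y - Q x y|) (hεsmall : ε ≤ 2 / Real.exp 1) :
    |mutInf P - mutInf Q| ≤ 3 * ε * Real.log K + 2 * binEnt (ε / 2) := by
  have hε0 : 0 ≤ ε := hε ▸ sum_nonneg fun x _ ↦ sum_nonneg fun y _ ↦ abs_nonneg _
  have hε1 : ε / 2 ≤ 2⁻¹ := by
    have : 2 / exp 1 ≤ 1 := (div_le_one (exp_pos 1)).2 (by linarith [add_one_le_exp 1])
    linarith
  have hlogK : 0 ≤ log K := log_nonneg (Nat.one_le_cast.2 (by omega))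
  have hY : |shEnt (margY P) - shEnt (margY Q)| ≤ ε / 2 * log K + binEntropy (ε / 2) := by
    rw [← hcard]
    refine abs_shEnt_sub_le (p := margY P) (q := margY Q)
      (fun y ↦ sum_nonneg fun x _ ↦ hPpos x y) (fun y ↦ sum_nonneg fun x _ ↦ hQpos x y)
      ((sum_margY P).trans hPsum) ((sum_margY Q).trans hQsum) ?_ hε1
    linarith [sum_abs_margY_sub_le P Q]
  have hXY : |jointEnt P - jointEnt Q| ≤ ε / 2 * log (K * K) + binEntropy (ε / 2) := by
    rw [jointEnt_eq_shEnt_uncurry, jointEnt_eq_shEnt_uncurry, ← hcard, ← Nat.cast_mul,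
      ← Fintype.card_prod]
    refine abs_shEnt_sub_le (fun z ↦ hPpos z.1 z.2) (fun z ↦ hQpos z.1 z.2)
      ((Fintype.sum_prod_type _).trans hPsum) ((Fintype.sum_prod_type _).trans hQsum) ?_ hε1
    rw [Fintype.sum_prod_type, ← hε]
  have hK0 : (K : ℝ) ≠ 0 := by exact_mod_cast (by omega : K ≠ 0)
  rw [log_mul hK0 hK0] at hXY
  rw [binEnt_eq_binEntropy, mutInf_sub_mutInf_of_margX_eq hmarg]
  calc _ ≤ |shEnt (margY P) - shEnt (margY Q)| + |jointEnt P - jointEnt Q| := abs_sub _ _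
    _ ≤ 3 * ε * log K + 2 * binEntropy (ε / 2) := by linarith [mul_nonneg hε0 hlogK]
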